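/- Every convex lattice polygon in R^2 with at least 5 edges contains at least one interior lattice point. -/

import Mathlib

/-!
Among five lattice points two are congruent modulo 2, so their midpoint `m` is a lattice point.
If `m` is not interior to the polygon, a supporting line through `m` contains those two vertices
and, the vertices being in convex position, no third one. Replacing the vertex farther from the
origin by `m` then gives a convex lattice polygon with as many vertices, contained in the old one,
with a smaller sum of squared norms of vertices; this descent cannot go on forever.
-/

def toR (p : ℤ × ℤ) : ℝ × ℝ := ((p.1 : ℝ), (p.2 : ℝ))

open Set

section ConvexPosition

variable {E : Type*} [AddCommGroup E] [Module ℝ E]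

theorem mem_extremePoints_convexHull_of_notMem_convexHull_sdiff {s : Set E} {x : E}
    (hx : x ∈ s) (hxs : x ∉ convexHull ℝ (s \ {x})) :
    x ∈ (convexHull ℝ s).extremePoints ℝ := by
  rcases (s \ {x}).eq_empty_or_nonempty with hempty | hne
  · rw [sdiff_eq_empty, subset_singleton_iff_eq] at hempty
    rcases hempty with h | h
    · exact absurd hx (h ▸ notMem_empty x)
    · simp [h]
  have hs : convexHull ℝ s = convexJoin ℝ {x} (convexHull ℝ (s \ {x})) := by
    rw [← convexHull_insert hne, insert_sdiff_singleton, insert_eq_of_mem hx]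
  refine ⟨subset_convexHull ℝ s hx, fun u hu v hv hxuv => ?_⟩
  rw [hs, convexJoin_singleton_left, mem_iUnion₂] at hu hv
  obtain ⟨c, hc, α', α, -, hα, hαα, rfl⟩ := hu
  obtain ⟨d, hd, β', β, -, hβ, hββ, rfl⟩ := hv
  obtain ⟨a, b, ha, hb, hab, hxab⟩ := hxuv
  obtain rfl : α' = 1 - α := eq_sub_of_add_eq hαα
  obtain rfl : β' = 1 - β := eq_sub_of_add_eq hββ
  have haα := mul_nonneg ha.le hα
  have hbβ := mul_nonneg hb.le hβ
  by_cases h0 : a * α + b * β = 0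
  · obtain rfl : α = 0 := by nlinarith
    simp
  -- otherwise `x` is a convex combination of `c, d ∈ convexHull ℝ (s \ {x})`
  have hcomb : (a * α + b * β) • x = (a * α) • c + (b * β) • d := by
    linear_combination (norm := module) -hxab + hab • x
  have hx_eq : x = (a * α / (a * α + b * β)) • c + (b * β / (a * α + b * β)) • d := by
    rw [← inv_smul_smul₀ h0 x, hcomb]
    simp only [smul_add, smul_smul, div_eq_inv_mul]
  have hmem := convex_convexHull ℝ (s \ {x}) hc hd (div_nonneg haα (add_nonneg haα hbβ))
    (div_nonneg hbβ (add_nonneg haα hbβ)) (by rw [← add_div, div_self h0])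
  rw [← hx_eq] at hmem
  exact absurd hmem hxs

theorem ConvexIndependent.subset_extremePoints_convexHull {A : Set E}
    (hA : ConvexIndependent ℝ ((↑) : A → E)) : A ⊆ (convexHull ℝ A).extremePoints ℝ :=
  fun x hx => mem_extremePoints_convexHull_of_notMem_convexHull_sdiff hx
    (convexIndependent_set_iff_notMem_convexHull_sdiff.1 hA x hx)

theorem ConvexIndependent.insert_sdiff {A : Set E}
    (hA : ConvexIndependent ℝ ((↑) : A → E)) {x q : E} (hx : x ∈ convexHull ℝ A)
    (hxq : x ∉ convexHull ℝ (A \ {q})) :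
    ConvexIndependent ℝ ((↑) : ↥(insert x (A \ {q})) → E) := by
  set B := insert x (A \ {q})
  rw [convexIndependent_set_iff_notMem_convexHull_sdiff]
  intro y hy
  rcases eq_or_ne y x with rfl | hyx
  · exact fun h => hxq (convexHull_mono (sdiff_singleton_subset_iff.2 subset_rfl) h)
  have hyA : y ∈ A := ((mem_insert_iff.1 hy).resolve_left hyx).1
  have hBA : convexHull ℝ B ⊆ convexHull ℝ A :=
    convexHull_min (insert_subset hx (sdiff_subset.trans (subset_convexHull ℝ A)))
      (convex_convexHull ℝ A)
  have hext : y ∈ (convexHull ℝ B).extremePoints ℝ :=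
    inter_extremePoints_subset_extremePoints_of_subset hBA
      ⟨subset_convexHull ℝ B hy, hA.subset_extremePoints_convexHull hyA⟩
  have := ((convex_convexHull ℝ B).mem_extremePoints_iff_mem_sdiff_convexHull_sdiff.1 hext).2
  exact fun h => this (convexHull_mono (sdiff_subset_sdiff_left (subset_convexHull ℝ B)) h)

theorem ConvexIndependent.not_collinear {A : Set E}
    (hA : ConvexIndependent ℝ ((↑) : A → E)) {x y z : E} (hx : x ∈ A) (hy : y ∈ A) (hz : z ∈ A)
    (hxy : x ≠ y) (hxz : x ≠ z) (hyz : y ≠ z) : ¬ Collinear ℝ {x, y, z} := by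
  have not_wbtw : ∀ a ∈ A, ∀ b ∈ A, ∀ c ∈ A, a ≠ b → b ≠ c → ¬ Wbtw ℝ a b c :=
    fun a ha b hb c hc hab hbc hw =>
      convexIndependent_set_iff_notMem_convexHull_sdiff.1 hA b hb <|
        segment_subset_convexHull (mem_sdiff_singleton.2 ⟨ha, hab⟩)
          (mem_sdiff_singleton.2 ⟨hc, hbc.symm⟩) hw.mem_segment
  intro h
  rcases h.wbtw_or_wbtw_or_wbtw with hw | hw | hw
  · exact not_wbtw x hx y hy z hz hxy hyz hw
  · exact not_wbtw y hy z hz x hx hyz hxz.symm hw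
  · exact not_wbtw z hz x hx y hy hxz.symm hxy hw

theorem ConvexIndependent.midpoint_notMem {A : Set E}
    (hA : ConvexIndependent ℝ ((↑) : A → E)) {p q : E} (hp : p ∈ A) (hq : q ∈ A)
    (hpq : p ≠ q) : midpoint ℝ p q ∉ A := fun hm =>
  convexIndependent_set_iff_notMem_convexHull_sdiff.1 hA _ hm <|
    segment_subset_convexHull
      (mem_sdiff_singleton.2 ⟨hp, fun h => hpq ((midpoint_eq_left_iff ℝ).1 h.symm)⟩)
      (mem_sdiff_singleton.2 ⟨hq, fun h => hpq ((midpoint_eq_right_iff ℝ).1 h.symm)⟩)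
      (midpoint_mem_segment p q)

theorem mem_convexHull_setOf_eq_of_le (f : E →ₗ[ℝ] ℝ) {s : Set E} {x : E}
    (hx : x ∈ convexHull ℝ s) (hs : ∀ y ∈ s, f y ≤ f x) :
    x ∈ convexHull ℝ {y ∈ s | f y = f x} := by
  set K := convexHull ℝ {y ∈ s | f y = f x}
  have hK : K ⊆ {y | f y = f x} :=
    convexHull_min (fun y hy => hy.2) (convex_hyperplane f.isLinear _)
  -- a proper convex combination with a point of `{f < f x}` stays in `{f < f x}`
  have hconv : Convex ℝ ({y | f y < f x} ∪ K) := by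
    refine convex_iff_forall_pos.2 fun y hy z hz a b ha hb hab => ?_
    by_cases hyz : y ∈ K ∧ z ∈ K
    · exact Or.inr (convex_convexHull ℝ _ hyz.1 hyz.2 ha.le hb.le hab)
    left
    have hle : ∀ w ∈ {y | f y < f x} ∪ K, f w ≤ f x := by
      rintro w (hw | hw)
      exacts [le_of_lt hw, (hK hw).le]
    have hlt : f y < f x ∨ f z < f x := by
      rcases hy with hy | hy
      · exact Or.inl hy
      rcases hz with hz | hz
      · exact Or.inr hz
      · exact absurd ⟨hy, hz⟩ hyz
    have hfx : f x = a * f x + b * f x := by rw [← add_mul, hab, one_mul]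
    simp only [mem_ofPred_eq, map_add, map_smul, smul_eq_mul]
    rcases hlt with h | h
    · nlinarith [mul_lt_mul_of_pos_left h ha, mul_le_mul_of_nonneg_left (hle z hz) hb.le]
    · nlinarith [mul_lt_mul_of_pos_left h hb, mul_le_mul_of_nonneg_left (hle y hy) ha.le]
  have hsub : s ⊆ {y | f y < f x} ∪ K := fun y hy =>
    (hs y hy).lt_or_eq.imp id fun h => subset_convexHull ℝ _ ⟨hy, h⟩
  exact (convexHull_min hsub hconv hx).resolve_left (lt_irrefl (f x))

end ConvexPosition

theorem Convex.exists_forall_le_of_notMem_interior {E : Type*} [TopologicalSpace E]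
    [AddCommGroup E] [Module ℝ E] [IsTopologicalAddGroup E] [ContinuousSMul ℝ E] {P : Set E}
    (hP : Convex ℝ P) {x z : E} (hz : z ∈ interior P) (hx : x ∉ interior P) :
    ∃ f : StrongDual ℝ E, f z < f x ∧ ∀ y ∈ P, f y ≤ f x := by
  obtain ⟨f, hf⟩ := geometric_hahn_banach_open_point hP.interior isOpen_interior hx
  refine ⟨f, hf z hz, fun y hy => ?_⟩
  have hclosure : closure (interior P) ⊆ {y | f y ≤ f x} :=
    closure_minimal (fun y hy => (hf y hy).le) (isClosed_le f.continuous continuous_const)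
  rw [hP.closure_interior_eq_closure_of_nonempty_interior ⟨z, hz⟩] at hclosure
  exact hclosure (subset_closure hy)

section Plane

variable {E : Type*} [NormedAddCommGroup E] [NormedSpace ℝ E] [FiniteDimensional ℝ E]

theorem interior_convexHull_nonempty_of_not_collinear (hE : Module.finrank ℝ E = 2)
    {s : Set E} {x y z : E} (hx : x ∈ s) (hy : y ∈ s) (hz : z ∈ s)
    (h : ¬ Collinear ℝ {x, y, z}) : (interior (convexHull ℝ s)).Nonempty := by
  rw [interior_convexHull_nonempty_iff_affineSpan_eq_top]
  have htop : affineSpan ℝ (range ![x, y, z]) = ⊤ :=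
    (affineIndependent_iff_not_collinear_set.2 h).affineSpan_eq_top_iff_card_eq_finrank_add_one.2
      (by simp [hE])
  refine eq_top_iff.2 (htop ▸ affineSpan_mono ℝ ?_)
  rintro _ ⟨i, rfl⟩
  fin_cases i <;> assumption

theorem ConvexIndependent.interior_convexHull_nonempty (hE : Module.finrank ℝ E = 2)
    {A : Set E} (hA : ConvexIndependent ℝ ((↑) : A → E)) (hA3 : 2 < A.ncard) :
    (interior (convexHull ℝ A)).Nonempty := by
  obtain ⟨x, hx, y, hy, z, hz, hxy, hxz, hyz⟩ :=
    (two_lt_ncard (finite_of_ncard_pos (by omega))).1 hA3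
  exact interior_convexHull_nonempty_of_not_collinear hE hx hy hz
    (hA.not_collinear hx hy hz hxy hxz hyz)

theorem collinear_setOf_eq (hE : Module.finrank ℝ E = 2) {f : E →ₗ[ℝ] ℝ} (hf : f ≠ 0) (c : ℝ) :
    Collinear ℝ {y | f y = c} := by
  rw [collinear_iff_finrank_le_one]
  have hspan : vectorSpan ℝ {y | f y = c} ≤ LinearMap.ker f := by
    rw [vectorSpan_def, Submodule.span_le]
    rintro _ ⟨a, ha, b, hb, rfl⟩
    simp_all [vsub_eq_sub]
  have hker := Submodule.finrank_lt (mt LinearMap.ker_eq_top.1 hf)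
  have := Submodule.finrank_mono hspan
  omega

theorem ConvexIndependent.insert_midpoint_sdiff (hE : Module.finrank ℝ E = 2) {A : Set E}
    (hA : ConvexIndependent ℝ ((↑) : A → E)) (hint : (interior (convexHull ℝ A)).Nonempty)
    {p q : E} (hp : p ∈ A) (hq : q ∈ A) (hpq : p ≠ q)
    (hmid : midpoint ℝ p q ∉ interior (convexHull ℝ A)) :
    ConvexIndependent ℝ ((↑) : ↥(insert (midpoint ℝ p q) (A \ {q})) → E) := by
  set x := midpoint ℝ p q
  obtain ⟨z, hz⟩ := hint
  obtain ⟨f, hfz, hf⟩ := (convex_convexHull ℝ A).exists_forall_le_of_notMem_interior hz hmid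
  have hfx : f x = (f p + f q) / 2 := by
    simp only [x, midpoint_eq_smul_add, invOf_eq_inv, map_smul, map_add, smul_eq_mul]
    ring
  have hfp_le := hf p (subset_convexHull ℝ A hp)
  have hfq_le := hf q (subset_convexHull ℝ A hq)
  have hfp : f p = f x := by linarith
  have hfq : f q = f x := by linarith
  have hline : Collinear ℝ {y | f y = f x} :=
    collinear_setOf_eq hE (f := (f : E →ₗ[ℝ] ℝ)) (fun h => hfz.ne <| by
      simpa using (LinearMap.congr_fun h z).trans (LinearMap.congr_fun h x).symm) _
  have hlevel : {y ∈ A \ {q} | f y = f x} ⊆ {p} := by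
    rintro y ⟨⟨hyA, hyq⟩, hfy⟩
    by_contra hyp
    refine hA.not_collinear hp hq hyA hpq (Ne.symm hyp) (Ne.symm hyq) (hline.subset ?_)
    rintro _ (rfl | rfl | rfl)
    exacts [hfp, hfq, hfy]
  refine hA.insert_sdiff (segment_subset_convexHull hp hq (midpoint_mem_segment p q)) fun hx => ?_
  have hxp := convexHull_mono hlevel <| mem_convexHull_setOf_eq_of_le (f : E →ₗ[ℝ] ℝ) hx
    fun y hy => hf y (subset_convexHull ℝ A hy.1)
  rw [convexHull_singleton] at hxp
  exact hpq ((midpoint_eq_left_iff ℝ).1 hxp)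

end Plane

theorem toR_injective : Function.Injective toR := fun a b h => by
  simp only [toR, Prod.mk.injEq, Int.cast_inj] at h
  exact Prod.ext h.1 h.2

theorem midpoint_toR_of_add_eq_add_self {p q m : ℤ × ℤ} (h : p + q = m + m) :
    midpoint ℝ (toR p) (toR q) = toR m := by
  have h1 : ((p.1 + q.1 : ℤ) : ℝ) = ((m.1 + m.1 : ℤ) : ℝ) := congrArg (fun v => (v.1 : ℝ)) h
  have h2 : ((p.2 + q.2 : ℤ) : ℝ) = ((m.2 + m.2 : ℤ) : ℝ) := congrArg (fun v => (v.2 : ℝ)) h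
  push_cast at h1 h2
  ext <;> simp only [midpoint_eq_smul_add, invOf_eq_inv, toR, Prod.smul_fst, Prod.smul_snd,
    Prod.fst_add, Prod.snd_add, smul_eq_mul] <;> linarith

theorem Finset.exists_ne_even_add_of_four_lt_card (V : Finset (ℤ × ℤ)) (hV : 4 < V.card) :
    ∃ p ∈ V, ∃ q ∈ V, p ≠ q ∧ Even (p + q) := by
  obtain ⟨p, hp, q, hq, hpq, hpar⟩ := Finset.exists_ne_map_eq_of_card_lt_of_maps_to
    (t := (Finset.univ : Finset (ZMod 2 × ZMod 2)))
    (f := fun v : ℤ × ℤ => ((v.1 : ZMod 2), (v.2 : ZMod 2))) (by simpa using hV)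
    (fun _ _ => Finset.mem_univ _)
  simp only [Prod.mk.injEq, ZMod.intCast_eq_intCast_iff_dvd_sub] at hpar
  obtain ⟨⟨a, ha⟩, ⟨b, hb⟩⟩ := hpar
  exact ⟨p, hp, q, hq, hpq, (p.1 + a, p.2 + b), Prod.ext (by simp; omega) (by simp; omega)⟩

def normSq (v : ℤ × ℤ) : ℕ := v.1.natAbs ^ 2 + v.2.natAbs ^ 2

theorem normSq_lt_of_add_eq_add_self {p q m : ℤ × ℤ} (hpq : p ≠ q) (hm : p + q = m + m)
    (hle : normSq p ≤ normSq q) : normSq m < normSq q := by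
  have h1 : p.1 + q.1 = m.1 + m.1 := congrArg Prod.fst hm
  have h2 : p.2 + q.2 = m.2 + m.2 := congrArg Prod.snd hm
  have hdiff : 0 < (p.1 - q.1) ^ 2 + (p.2 - q.2) ^ 2 := by
    rcases ne_or_eq p.1 q.1 with h | h
    · have : p.1 - q.1 ≠ 0 := sub_ne_zero.2 h
      positivity
    · have : p.2 - q.2 ≠ 0 := sub_ne_zero.2 fun h' => hpq (Prod.ext h h')
      positivity
  have hm4 : 4 * (m.1 ^ 2 + m.2 ^ 2) = (p.1 + q.1) ^ 2 + (p.2 + q.2) ^ 2 := by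
    rw [h1, h2]; ring
  unfold normSq at hle ⊢
  zify at hle ⊢
  simp only [sq_abs] at hle ⊢
  nlinarith

theorem ncard_image_toR (V : Finset (ℤ × ℤ)) : (toR '' ↑V).ncard = V.card := by
  rw [ncard_image_of_injective _ toR_injective, ncard_coe_finset]

theorem image_toR_insert_erase (V : Finset (ℤ × ℤ)) (m q : ℤ × ℤ) :
    toR '' ↑(insert m (V.erase q)) = insert (toR m) (toR '' ↑V \ {toR q}) := by
  simp [image_insert_eq, image_sdiff toR_injective]

theorem convexHull_image_toR_insert_erase_subset {V : Finset (ℤ × ℤ)} {p q m : ℤ × ℤ}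
    (hp : p ∈ V) (hq : q ∈ V) (hm : p + q = m + m) :
    convexHull ℝ (toR '' ↑(insert m (V.erase q))) ⊆ convexHull ℝ (toR '' ↑V) := by
  refine convexHull_min ?_ (convex_convexHull ℝ _)
  rw [image_toR_insert_erase, ← midpoint_toR_of_add_eq_add_self hm]
  exact insert_subset (segment_subset_convexHull (mem_image_of_mem _ hp)
    (mem_image_of_mem _ hq) (midpoint_mem_segment _ _))
    (sdiff_subset.trans (subset_convexHull ℝ _))

theorem convexIndependent_image_toR_insert_erase {V : Finset (ℤ × ℤ)}
    (hV : ConvexIndependent ℝ ((↑) : ↥(toR '' ↑V) → ℝ × ℝ))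
    (hint : (interior (convexHull ℝ (toR '' ↑V))).Nonempty) {p q m : ℤ × ℤ} (hp : p ∈ V)
    (hq : q ∈ V) (hpq : p ≠ q) (hm : p + q = m + m)
    (hmint : toR m ∉ interior (convexHull ℝ (toR '' ↑V))) :
    ConvexIndependent ℝ ((↑) : ↥(toR '' ↑(insert m (V.erase q))) → ℝ × ℝ) := by
  rw [image_toR_insert_erase, ← midpoint_toR_of_add_eq_add_self hm]
  rw [← midpoint_toR_of_add_eq_add_self hm] at hmint
  exact hV.insert_midpoint_sdiff (by simp) hint (mem_image_of_mem _ hp) (mem_image_of_mem _ hq)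
    (toR_injective.ne hpq) hmint

theorem exists_lattice_point_mem_interior_convexHull (V : Finset (ℤ × ℤ)) (hV : 5 ≤ V.card)
    (hind : ConvexIndependent ℝ ((↑) : ↥(toR '' ↑V) → ℝ × ℝ)) :
    ∃ m : ℤ × ℤ, toR m ∈ interior (convexHull ℝ (toR '' ↑V)) := by
  induction h : ∑ v ∈ V, normSq v using Nat.strong_induction_on generalizing V with
  | _ n ih =>
  obtain ⟨p, hp, q, hq, hpq, m, hm⟩ := V.exists_ne_even_add_of_four_lt_card (by omega)
  wlog hle : normSq p ≤ normSq q generalizing p q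
  · exact this q hq p hp hpq.symm (by rwa [add_comm]) (le_of_not_ge hle)
  by_cases hmint : toR m ∈ interior (convexHull ℝ (toR '' ↑V))
  · exact ⟨m, hmint⟩
  have hmV : m ∉ V.erase q := fun hmV => hind.midpoint_notMem (mem_image_of_mem _ hp)
    (mem_image_of_mem _ hq) (toR_injective.ne hpq)
    (midpoint_toR_of_add_eq_add_self hm ▸ mem_image_of_mem _ (Finset.mem_of_mem_erase hmV))
  have hcard : (insert m (V.erase q)).card = V.card := by
    rw [Finset.card_insert_of_notMem hmV, Finset.card_erase_add_one hq]
  have hsum : ∑ v ∈ insert m (V.erase q), normSq v < n := by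
    rw [← h, Finset.sum_insert hmV, ← Finset.add_sum_erase V _ hq]
    have := normSq_lt_of_add_eq_add_self hpq hm hle
    omega
  have hint := hind.interior_convexHull_nonempty (by simp) (by rw [ncard_image_toR]; omega)
  obtain ⟨m', hm'⟩ := ih _ hsum _ (hcard ▸ hV)
    (convexIndependent_image_toR_insert_erase hind hint hp hq hpq hm hmint) rfl
  exact ⟨m', interior_mono (convexHull_image_toR_insert_erase_subset hp hq hm) hm'⟩

theorem stmt5_general (S : Finset (ℤ × ℤ)) (P : Set (ℝ × ℝ))
    (hP : P = convexHull ℝ (toR '' (S : Set (ℤ × ℤ))))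
    (hvert : 5 ≤ (Set.extremePoints ℝ P).ncard) :
    ∃ m : ℤ × ℤ, toR m ∈ interior P := by
  classical
  set V := S.filter fun v => toR v ∈ P.extremePoints ℝ
  have hV : toR '' ↑V = P.extremePoints ℝ := by
    have hsub : P.extremePoints ℝ ⊆ toR '' ↑S := hP ▸ extremePoints_convexHull_subset
    rw [Finset.coe_filter]
    change toR '' (↑S ∩ toR ⁻¹' P.extremePoints ℝ) = _
    rw [image_inter_preimage, inter_eq_right.2 hsub]
  have hPconv : Convex ℝ P := hP ▸ convex_convexHull ℝ _
  obtain ⟨m, hm⟩ := exists_lattice_point_mem_interior_convexHull V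
    (by rwa [← ncard_image_toR, hV])
    (hV ▸ hPconv.convexIndependent_extremePoints)
  exact ⟨m, interior_mono (hV ▸ convexHull_min extremePoints_subset hPconv) hm⟩

/-- Arkinstall's lemma: every two-dimensional convex lattice polygon with at least 5
edges (equivalently, at least 5 vertices) contains an interior lattice point. -/
theorem stmt5 (S : Finset (ℤ × ℤ)) (P : Set (ℝ × ℝ))
    (hP : P = convexHull ℝ (toR '' (S : Set (ℤ × ℤ))))
    (hdim : (interior P).Nonempty)
    (hvert : 5 ≤ (Set.extremePoints ℝ P).ncard) :
    ∃ m : ℤ × ℤ, toR m ∈ interior P :=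
  stmt5_general S P hP hvert
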